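/- arXiv:1611.03254 — 5 statements merged into one kernel-verified Lean document; each statement's English description precedes it below -/
import Mathlib

section
/- (Reduction underlying NP-hardness) Let G be a finite simple graph on a finite vertex set V and let k ≥ 1. Consider the instance whose host graph is the complete graph on V and whose similarity graph is G itself. Then a nonempty vertex set U ⊆ V is a (k,r)-core of this instance if and only if U is a clique of G with |U| ≥ k+1. In particular, G contains a clique of k+1 vertices if and only if this instance admits a (k,r)-core. -/
/-- Number of neighbors of `u` (w.r.t. graph `G`) inside the finite vertex set `S`. -/
noncomputable def degIn {V : Type*} (G : SimpleGraph V) (u : V) (S : Finset V) : ℕ :=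
  ((S : Set V) ∩ G.neighborSet u).ncard

/-- `S` satisfies the structure constraint for `k`: every vertex of `S` has
at least `k` neighbors of `G` inside `S`. -/
def StructCon {V : Type*} (G : SimpleGraph V) (k : ℕ) (S : Finset V) : Prop :=
  ∀ u ∈ S, k ≤ degIn G u S

/-- `S` satisfies the similarity constraint w.r.t. the similarity graph `G'`:
every two distinct vertices of `S` are similar (adjacent in `G'`). -/
def SimCon {V : Type*} (G' : SimpleGraph V) (S : Finset V) : Prop :=
  ∀ u ∈ S, ∀ v ∈ S, u ≠ v → G'.Adj u v

/-- `S` is a (k,r)-core of host graph `G` with similarity graph `G'`. -/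
def IsKRCore {V : Type*} (G G' : SimpleGraph V) (k : ℕ) (S : Finset V) : Prop :=
  S.Nonempty ∧ (SimpleGraph.induce (S : Set V) G).Connected ∧
    StructCon G k S ∧ SimCon G' S

/-- `S` is a maximal (k,r)-core: no (k,r)-core properly contains it. -/
def IsMaxKRCore {V : Type*} (G G' : SimpleGraph V) (k : ℕ) (S : Finset V) : Prop :=
  IsKRCore G G' k S ∧ ∀ T : Finset V, IsKRCore G G' k T → S ⊆ T → S = T

lemma degIn_top {V : Type*} [DecidableEq V] (u : V) (S : Finset V) :
    degIn (⊤ : SimpleGraph V) u S = (S.erase u).card := by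
  unfold degIn
  rw [show (S : Set V) ∩ (⊤ : SimpleGraph V).neighborSet u
        = ((S.erase u : Finset V) : Set V) by
      ext v; simp [SimpleGraph.neighborSet, and_comm, eq_comm, ne_comm]]
  rw [Set.ncard_coe_finset]

lemma induce_top {V : Type*} (s : Set V) :
    (SimpleGraph.induce s (⊤ : SimpleGraph V)) = ⊤ := by
  ext a b
  simp [Subtype.coe_injective.ne_iff]

theorem stmt_1 {V : Type*} [Fintype V] (G : SimpleGraph V) (k : ℕ) (hk : 1 ≤ k) :
    (∀ U : Finset V,
      IsKRCore (⊤ : SimpleGraph V) G k U ↔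
        (G.IsClique (U : Set V) ∧ k + 1 ≤ U.card)) ∧
    ((∃ Q : Finset V, G.IsClique (Q : Set V) ∧ Q.card = k + 1) ↔
      (∃ U : Finset V, IsKRCore (⊤ : SimpleGraph V) G k U)) := by
  classical
  have main : ∀ U : Finset V,
      IsKRCore (⊤ : SimpleGraph V) G k U ↔
        (G.IsClique (U : Set V) ∧ k + 1 ≤ U.card) := by
    intro U
    constructor
    · rintro ⟨hne, _, hstruct, hsim⟩
      refine ⟨?_, ?_⟩
      · intro u hu v hv huv
        exact hsim u hu v hv huv
      · obtain ⟨u, hu⟩ := hne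
        have := hstruct u hu
        rw [degIn_top, Finset.card_erase_of_mem hu] at this
        omega
    · rintro ⟨hclique, hcard⟩
      have hne : U.Nonempty := Finset.card_pos.mp (by omega)
      refine ⟨hne, ?_, ?_, ?_⟩
      · rw [induce_top]
        have : Nonempty (U : Set V) := by
          obtain ⟨u, hu⟩ := hne
          exact ⟨⟨u, hu⟩⟩
        exact SimpleGraph.connected_top
      · intro u hu
        rw [degIn_top, Finset.card_erase_of_mem hu]
        omega
      · intro u hu v hv huv
        exact hclique hu hv huv
  refine ⟨main, ?_, ?_⟩
  · rintro ⟨Q, hQ, hQcard⟩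
    exact ⟨Q, (main Q).mpr ⟨hQ, by omega⟩⟩
  · rintro ⟨U, hU⟩
    obtain ⟨hclique, hcard⟩ := (main U).mp hU
    obtain ⟨Q, hQU, hQcard⟩ := Finset.exists_subset_card_eq hcard
    exact ⟨Q, hclique.subset (by exact_mod_cast hQU), hQcard⟩
end

section
/- (Validation rule) Let k ≥ 1, let M and C be disjoint finite vertex sets, and let u ∈ C be a vertex that is similar to every other vertex of M ∪ C and has at least k neighbors of G inside M. Then every maximal (k,r)-core R with M ⊆ R ⊆ M ∪ C contains u. -/
theorem stmt_5 {V : Type*} [DecidableEq V] (G G' : SimpleGraph V) (k : ℕ)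
    (hk : 1 ≤ k) (M C : Finset V) (hdisj : Disjoint M C) (u : V) (huC : u ∈ C)
    (hsim : ∀ v ∈ M ∪ C, v ≠ u → G'.Adj u v)
    (hdeg : k ≤ degIn G u M) :
    ∀ R : Finset V, IsMaxKRCore G G' k R → M ⊆ R → R ⊆ M ∪ C → u ∈ R := by
  intro R hR hMR hRMC
  -- find a G-neighbor of u inside M
  obtain ⟨w, hwM, hwadj⟩ : ∃ w ∈ M, G.Adj u w := by
    have hfin : ((M : Set V) ∩ G.neighborSet u).Finite :=
      M.finite_toSet.inter_of_left _
    have hpos : 0 < ((M : Set V) ∩ G.neighborSet u).ncard := by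
      have : 1 ≤ degIn G u M := le_trans hk hdeg
      exact lt_of_lt_of_le Nat.zero_lt_one this
    obtain ⟨w, hw⟩ := (Set.ncard_pos hfin).mp hpos
    exact ⟨w, hw.1, hw.2⟩
  set T : Finset V := insert u R with hT
  have hRT : R ⊆ T := Finset.subset_insert u R
  have huT : u ∈ T := Finset.mem_insert_self u R
  have hwR : w ∈ R := hMR hwM
  have hsubST : (↑R : Set V) ⊆ (↑T : Set V) := by
    exact_mod_cast Finset.coe_subset.mpr hRT
  have hmono : ∀ (v : V) (A B : Finset V), A ⊆ B → degIn G v A ≤ degIn G v B := by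
    intro v A B hAB
    apply Set.ncard_le_ncard
    · exact Set.inter_subset_inter_left _ (by exact_mod_cast hAB)
    · exact B.finite_toSet.inter_of_left _
  have hcore : IsKRCore G G' k T := by
    refine ⟨⟨u, huT⟩, ?_, ?_, ?_⟩
    · -- connectivity
      constructor
      · suffices h : ∀ x : (↑T : Set V),
            (SimpleGraph.induce (↑T : Set V) G).Reachable x ⟨w, by exact_mod_cast hRT hwR⟩ by
          intro x y; exact (h x).trans (h y).symm
        rintro ⟨x, hxT⟩
        have hx' : x ∈ T := by exact_mod_cast hxT
        rcases Finset.mem_insert.mp hx' with rfl | hxR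
        · exact SimpleGraph.Adj.reachable (by exact hwadj)
        · have hreach : (SimpleGraph.induce (↑R : Set V) G).Reachable ⟨x, hxR⟩ ⟨w, hwR⟩ :=
            hR.1.2.1 ⟨x, hxR⟩ ⟨w, hwR⟩
          let f : SimpleGraph.induce (↑R : Set V) G →g SimpleGraph.induce (↑T : Set V) G :=
            ⟨Set.inclusion hsubST, fun h => h⟩
          exact hreach.map f
    · -- structure
      intro v hv
      rcases Finset.mem_insert.mp hv with rfl | hvR
      · exact le_trans hdeg (hmono v M T (hMR.trans hRT))
      · exact le_trans (hR.1.2.2.1 v hvR) (hmono v R T hRT)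
    · -- similarity
      intro a ha b hb hab
      rcases Finset.mem_insert.mp ha with rfl | haR
      · rcases Finset.mem_insert.mp hb with rfl | hbR
        · exact absurd rfl hab
        · exact hsim b (hRMC hbR) (fun h => hab h.symm)
      · rcases Finset.mem_insert.mp hb with rfl | hbR
        · exact (hsim a (hRMC haR) (fun h => hab h)).symm
        · exact hR.1.2.2.2 a haR b hbR hab
  have := hR.2 T hcore hRT
  rw [this]; exact huT
end

section
/- (Early termination, Theorem 5(i)) Let k ≥ 1, let M and C be disjoint finite vertex sets, and let u ∉ M ∪ C be a vertex that is similar to every vertex of M ∪ C and has at least k neighbors of G inside M. Then for every (k,r)-core R with M ⊆ R ⊆ M ∪ C, the set R ∪ {u} is again a (k,r)-core; consequently no (k,r)-core R with M ⊆ R ⊆ M ∪ C is a maximal (k,r)-core. -/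
lemma aux_conn {V : Type*} (G : SimpleGraph V) (s : Set V)
    (hc : (SimpleGraph.induce s G).Connected) (u w : V) (hw : w ∈ s) (ha : G.Adj u w) :
    (SimpleGraph.induce (s ∪ {u}) G).Connected := by
  rw [SimpleGraph.connected_iff]
  constructor
  · have key : ∀ x : (s ∪ {u} : Set V),
        (SimpleGraph.induce (s ∪ {u}) G).Reachable x ⟨w, Or.inl hw⟩ := by
      rintro ⟨x, hx | hx⟩
      · exact (hc.preconnected ⟨x, hx⟩ ⟨w, hw⟩).map
          (G.induceHomOfLE Set.subset_union_left).toHom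
      · have : (SimpleGraph.induce (s ∪ {u}) G).Adj ⟨x, Or.inr hx⟩ ⟨w, Or.inl hw⟩ := by
          simp only [SimpleGraph.comap_adj, Function.Embedding.coe_subtype]
          rw [show x = u from hx]
          exact ha
        exact this.reachable
    intro a b
    exact (key a).trans (key b).symm
  · exact ⟨⟨w, Or.inl hw⟩⟩

theorem stmt_6 {V : Type*} [DecidableEq V] (G G' : SimpleGraph V) (k : ℕ)
    (hk : 1 ≤ k) (M C : Finset V) (hdisj : Disjoint M C) (u : V)
    (hu : u ∉ M ∪ C)
    (hsim : ∀ v ∈ M ∪ C, G'.Adj u v)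
    (hdeg : k ≤ degIn G u M) :
    ∀ R : Finset V, IsKRCore G G' k R → M ⊆ R → R ⊆ M ∪ C →
      IsKRCore G G' k (R ∪ {u}) ∧ ¬ IsMaxKRCore G G' k R := by
  intro R hR hMR hRMC
  obtain ⟨hne, hconn, hstruct, hsimc⟩ := hR
  have huR : u ∉ R := fun h => hu (hRMC h)
  -- u has a neighbor w in M
  have hMfin : ((M : Set V) ∩ G.neighborSet u).Finite :=
    M.finite_toSet.inter_of_left _
  have hnonempty : ((M : Set V) ∩ G.neighborSet u).Nonempty := by
    rw [← Set.ncard_pos hMfin]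
    exact lt_of_lt_of_le hk hdeg
  obtain ⟨w, hwM, hwadj⟩ := hnonempty
  have hwadj' : G.Adj u w := hwadj
  have hwR : w ∈ R := hMR hwM
  have hcoe : ((R ∪ {u} : Finset V) : Set V) = (R : Set V) ∪ {u} := by
    simp [Finset.coe_union]
  have hcore : IsKRCore G G' k (R ∪ {u}) := by
    refine ⟨⟨u, by simp⟩, ?_, ?_, ?_⟩
    · rw [hcoe]
      exact aux_conn G _ hconn u w hwR hwadj'
    · intro v hv
      have hsub : ((R : Set V) ∩ G.neighborSet v) ⊆
          (((R ∪ {u} : Finset V) : Set V) ∩ G.neighborSet v) := by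
        rw [hcoe]; exact Set.inter_subset_inter_left _ Set.subset_union_left
      have hfin : (((R ∪ {u} : Finset V) : Set V) ∩ G.neighborSet v).Finite :=
        (R ∪ {u}).finite_toSet.inter_of_left _
      rcases Finset.mem_union.1 hv with hvR | hvu
      · exact le_trans (hstruct v hvR) (Set.ncard_le_ncard hsub hfin)
      · have hvu' : v = u := Finset.mem_singleton.1 hvu
        have hsub' : ((M : Set V) ∩ G.neighborSet u) ⊆
            (((R ∪ {u} : Finset V) : Set V) ∩ G.neighborSet u) := by
          rw [hcoe]
          exact Set.inter_subset_inter_left _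
            (le_trans (by exact_mod_cast hMR) Set.subset_union_left)
        have hfin' : (((R ∪ {u} : Finset V) : Set V) ∩ G.neighborSet u).Finite :=
          (R ∪ {u}).finite_toSet.inter_of_left _
        rw [hvu']
        exact le_trans hdeg (Set.ncard_le_ncard hsub' hfin')
    · intro a ha b hb hab
      rcases Finset.mem_union.1 ha with haR | hau
      · rcases Finset.mem_union.1 hb with hbR | hbu
        · exact hsimc a haR b hbR hab
        · have : b = u := Finset.mem_singleton.1 hbu
          subst this
          exact (hsim a (hRMC haR)).symm
      · have : a = u := Finset.mem_singleton.1 hau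
        subst this
        rcases Finset.mem_union.1 hb with hbR | hbu
        · exact hsim b (hRMC hbR)
        · exact absurd (Finset.mem_singleton.1 hbu).symm hab
  refine ⟨hcore, ?_⟩
  rintro ⟨-, hmax⟩
  have := hmax (R ∪ {u}) hcore Finset.subset_union_left
  have : u ∈ R := by rw [this]; simp
  exact huR this
end

section
/- (Early termination, Theorem 5(ii)) Let k ≥ 1, let M and C be disjoint finite vertex sets, and let U be a nonempty finite vertex set disjoint from M ∪ C such that every u ∈ U is similar to every other vertex of M ∪ C ∪ U, and every u ∈ U has at least k neighbors of G inside M ∪ U. Then for every (k,r)-core R with M ⊆ R ⊆ M ∪ C, the set R ∪ U satisfies both the structure constraint and the similarity constraint; if moreover the subgraph of G induced on R ∪ U is connected, then R ∪ U is a (k,r)-core properly containing R, so R is not a maximal (k,r)-core. -/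
lemma degIn_mono {V : Type*} (G : SimpleGraph V) (u : V) {S T : Finset V}
    (h : S ⊆ T) : degIn G u S ≤ degIn G u T := by
  apply Set.ncard_le_ncard
  · exact Set.inter_subset_inter_left _ (by exact_mod_cast h)
  · exact Set.Finite.inter_of_left (T.finite_toSet) _

theorem stmt_7 {V : Type*} [DecidableEq V] (G G' : SimpleGraph V) (k : ℕ)
    (hk : 1 ≤ k) (M C U : Finset V) (hdisj : Disjoint M C)
    (hUne : U.Nonempty) (hUdisj : Disjoint U (M ∪ C))
    (hsim : ∀ u ∈ U, ∀ v ∈ M ∪ C ∪ U, v ≠ u → G'.Adj u v)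
    (hdeg : ∀ u ∈ U, k ≤ degIn G u (M ∪ U)) :
    ∀ R : Finset V, IsKRCore G G' k R → M ⊆ R → R ⊆ M ∪ C →
      StructCon G k (R ∪ U) ∧ SimCon G' (R ∪ U) ∧
      ((SimpleGraph.induce ((R ∪ U : Finset V) : Set V) G).Connected →
        IsKRCore G G' k (R ∪ U) ∧ R ⊂ R ∪ U ∧ ¬ IsMaxKRCore G G' k R) := by
  intro R hR hMR hRMC
  obtain ⟨hRne, hRconn, hRstruct, hRsim⟩ := hR
  have hstruct : StructCon G k (R ∪ U) := by
    intro u hu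
    rcases Finset.mem_union.mp hu with h | h
    · exact le_trans (hRstruct u h) (degIn_mono G u Finset.subset_union_left)
    · refine le_trans (hdeg u h) (degIn_mono G u ?_)
      exact Finset.union_subset_union_left hMR
  have hmem : ∀ v ∈ R ∪ U, v ∈ M ∪ C ∪ U := by
    intro v hv
    rcases Finset.mem_union.mp hv with h | h
    · exact Finset.mem_union_left _ (hRMC h)
    · exact Finset.mem_union_right _ h
  have hsimcon : SimCon G' (R ∪ U) := by
    intro u hu v hv hne
    rcases Finset.mem_union.mp hu with h | h
    · rcases Finset.mem_union.mp hv with h' | h'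
      · exact hRsim u h v h' hne
      · exact (hsim v h' u (hmem u hu) hne).symm
    · exact hsim u h v (hmem v hv) hne.symm
  refine ⟨hstruct, hsimcon, fun hconn => ?_⟩
  have hsub : R ⊂ R ∪ U := by
    refine Finset.ssubset_iff_of_subset Finset.subset_union_left |>.mpr ?_
    obtain ⟨u, hu⟩ := hUne
    refine ⟨u, Finset.mem_union_right _ hu, fun hc => ?_⟩
    exact (Finset.disjoint_left.mp hUdisj hu) (Finset.mem_union.mp (hRMC hc) |>.elim
      (Finset.mem_union_left _) (Finset.mem_union_right _))
  have hcore : IsKRCore G G' k (R ∪ U) :=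
    ⟨hRne.mono Finset.subset_union_left, hconn, hstruct, hsimcon⟩
  exact ⟨hcore, hsub, fun hmax => hsub.ne (hmax.2 _ hcore Finset.subset_union_left)⟩
end

section
/- (Safe removal of dissimilar edges) Let u and v be two adjacent vertices of G that are dissimilar (not adjacent in the similarity graph G'), and let H be the graph obtained from G by deleting the edge {u,v}. Then a vertex set R is a (k,r)-core of G (with respect to G') if and only if R is a (k,r)-core of H (with respect to G'). In particular, no (k,r)-core of G contains both endpoints of a dissimilar edge. -/
theorem stmt_13 {V : Type*} (G G' : SimpleGraph V) (k : ℕ) (u v : V)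
    (hadj : G.Adj u v) (hdis : ¬ G'.Adj u v) :
    (∀ R : Finset V,
      IsKRCore G G' k R ↔ IsKRCore (G.deleteEdges {s(u, v)}) G' k R) ∧
    (∀ R : Finset V, IsKRCore G G' k R → ¬ (u ∈ R ∧ v ∈ R)) := by

  have hne : u ≠ v := hadj.ne
  have key : ∀ R : Finset V, SimCon G' R → ¬ (u ∈ R ∧ v ∈ R) := by
    rintro R hsim ⟨hu, hv⟩
    exact hdis (hsim u hu v hv hne)
  have hadjiff : ∀ R : Finset V, ¬ (u ∈ R ∧ v ∈ R) → ∀ x ∈ R, ∀ y ∈ R,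
      (G.Adj x y ↔ (G.deleteEdges {s(u, v)}).Adj x y) := by
    intro R hR x hx y hy
    rw [SimpleGraph.deleteEdges_adj]
    constructor
    · intro h
      refine ⟨h, ?_⟩
      simp only [Set.mem_singleton_iff, Sym2.eq, Sym2.rel_iff', Prod.mk.injEq, Prod.swap_prod_mk]
      rintro (⟨rfl, rfl⟩ | ⟨rfl, rfl⟩)
      · exact hR ⟨hx, hy⟩
      · exact hR ⟨hy, hx⟩
    · exact fun h => h.1
  have main : ∀ R : Finset V, ¬ (u ∈ R ∧ v ∈ R) →
      (IsKRCore G G' k R ↔ IsKRCore (G.deleteEdges {s(u, v)}) G' k R) := by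
    intro R hR
    have hind : SimpleGraph.induce (R : Set V) G
        = SimpleGraph.induce (R : Set V) (G.deleteEdges {s(u, v)}) := by
      ext ⟨x, hx⟩ ⟨y, hy⟩
      simp only [SimpleGraph.comap_adj]
      exact hadjiff R hR x hx y hy
    have hdeg : ∀ w ∈ R, degIn G w R = degIn (G.deleteEdges {s(u, v)}) w R := by
      intro w hw
      unfold degIn
      congr 1
      ext z
      simp only [Set.mem_inter_iff, SimpleGraph.mem_neighborSet, Finset.mem_coe]
      constructor
      · rintro ⟨hz, hadj'⟩
        exact ⟨hz, (hadjiff R hR w hw z hz).mp hadj'⟩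
      · rintro ⟨hz, hadj'⟩
        exact ⟨hz, hadj'.1⟩
    unfold IsKRCore StructCon
    rw [hind]
    constructor
    · rintro ⟨h1, h2, h3, h4⟩
      exact ⟨h1, h2, fun w hw => (hdeg w hw) ▸ h3 w hw, h4⟩
    · rintro ⟨h1, h2, h3, h4⟩
      exact ⟨h1, h2, fun w hw => (hdeg w hw) ▸ h3 w hw, h4⟩
  refine ⟨fun R => ?_, fun R hcore => key R hcore.2.2.2⟩
  constructor
  · intro h
    exact (main R (key R h.2.2.2)).mp h
  · intro h
    exact (main R (key R h.2.2.2)).mpr h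
end
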